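/- Let (Γ,φ) be an incidence gain graph with gain group G acting on a nonempty set Λ, and let f : V → G be a switching function. Then the pair of maps (g₁,g₂), where g₁ fixes each point x_p and sends y_{b,λ} to y_{b,f(b)·λ}, and g₂ sends z_{p,λ} to z_{p,f(p)·λ}, is an isomorphism of incidence structures from 𝔐(Γ,φ) to 𝔐(Γ, ᶠφ). -/

import Mathlib

open Classical

/-- An incidence structure: points `P`, lines `B`, incidence relation `inc`. -/
structure IncStruct (P B : Type*) where
  inc : P → B → Prop

namespace IncStruct

variable {P B : Type*}

/-- Adjacency in the incidence graph on `P ⊕ B`. -/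
def adj (S : IncStruct P B) : P ⊕ B → P ⊕ B → Prop
  | Sum.inl p, Sum.inr b => S.inc p b
  | Sum.inr b, Sum.inl p => S.inc p b
  | _, _ => False

/-- `c` is a `k`-chain from `u` to `v`: a list of `k+1` elements, starting at `u`,
ending at `v`, with consecutive elements incident. -/
def IsNChain (S : IncStruct P B) (k : ℕ) (u v : P ⊕ B) (c : List (P ⊕ B)) : Prop :=
  c.length = k + 1 ∧ c.head? = some u ∧ c.getLast? = some v ∧ c.Chain' S.adj

/-- Distance between two elements of an incidence structure: the least length of a
chain from `u` to `v`, or `∞` if there is none. -/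
noncomputable def dist (S : IncStruct P B) (u v : P ⊕ B) : ℕ∞ :=
  sInf {n : ℕ∞ | ∃ (k : ℕ) (c : List (P ⊕ B)), n = (k : ℕ∞) ∧ S.IsNChain k u v c}

/-- A linear space: two distinct points lie on a unique common line, every line has
at least two points, and some point-line pair is non-incident. -/
def IsLinearSpace (S : IncStruct P B) : Prop :=
  (∀ p q : P, p ≠ q → ∃! b : B, S.inc p b ∧ S.inc q b) ∧
  (∀ b : B, ∃ p q : P, p ≠ q ∧ S.inc p b ∧ S.inc q b) ∧
  (∃ (p : P) (b : B), ¬ S.inc p b)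

/-- A generalized quadrangle: all distances are at most `4`, and whenever
`d(u,v) = k < 4` there is a unique `k`-chain from `u` to `v`. -/
def IsGQ (S : IncStruct P B) : Prop :=
  (∀ u v : P ⊕ B, S.dist u v ≤ 4) ∧
  ∀ (u v : P ⊕ B) (k : ℕ), k < 4 → S.dist u v = (k : ℕ∞) →
    ∃! c : List (P ⊕ B), S.IsNChain k u v c

end IncStruct

section Construction

variable {P B G : Type*} [Group G]

/-- Incidence of Construction 𝔐: points are `P ⊕ B × Λ` (the `x_p` and `y_{b,λ}`),
lines are `P × Λ` (the `z_{p,μ}`); `x_p I' z_{p,λ}` always, and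
`y_{b,λ} I' z_{p,μ}` iff `b I p` and `μ = φ(bp) • λ`. -/
def Minc (S : IncStruct P B) (φ : B → P → G) (Λ : Type*) [MulAction G Λ] :
    P ⊕ B × Λ → P × Λ → Prop
  | Sum.inl q, (p, _) => q = p
  | Sum.inr (b, l), (p, m) => S.inc p b ∧ m = φ b p • l

/-- The incidence structure 𝔐(Γ,φ) of Construction 𝔐. -/
def MStruct (S : IncStruct P B) (φ : B → P → G) (Λ : Type*) [MulAction G Λ] :
    IncStruct (P ⊕ B × Λ) (P × Λ) := ⟨Minc S φ Λ⟩

/-- The gain `ρ_{b,p}(q) = φ(b'p) φ(b'q)⁻¹ φ(bq)` of the walk `(b, q, b', p)`,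
where `b'` is the (unique, in a linear space) line through `p` and `q`. -/
noncomputable def rho (S : IncStruct P B) (φ : B → P → G) (b : B) (p q : P) : G :=
  if h : ∃ b' : B, S.inc p b' ∧ S.inc q b' then
    φ h.choose p * (φ h.choose q)⁻¹ * φ b q
  else 1

end Construction

section Switching

variable {P B G Λ : Type*} [Group G] [MulAction G Λ]

lemma bijective_fiberwise_smul {α : Type*} (a : α → G) :
    Function.Bijective fun z : α × Λ => (z.1, a z.1 • z.2) :=
  (Equiv.prodShear (Equiv.refl α) fun x => MulAction.toPerm (a x)).bijective

def switchGain (φ : B → P → G) (f : P ⊕ B → G) : B → P → G :=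
  fun b p => f (Sum.inl p) * φ b p * (f (Sum.inr b))⁻¹

def switchPoint (f : P ⊕ B → G) : P ⊕ B × Λ → P ⊕ B × Λ :=
  Sum.map id fun y => (y.1, f (Sum.inr y.1) • y.2)

def switchLine (f : P ⊕ B → G) : P × Λ → P × Λ :=
  fun z => (z.1, f (Sum.inl z.1) • z.2)

lemma switchPoint_bijective (f : P ⊕ B → G) : Function.Bijective (switchPoint (Λ := Λ) f) :=
  Function.bijective_id.sumMap (bijective_fiberwise_smul fun b => f (Sum.inr b))

lemma switchLine_bijective (f : P ⊕ B → G) : Function.Bijective (switchLine (Λ := Λ) f) :=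
  bijective_fiberwise_smul fun p => f (Sum.inl p)

/-- Switching multiplies both sides of the incidence condition `μ = φ(bp) • λ` on the left
by `f(p)`. -/
lemma mStruct_inc_switch_iff (S : IncStruct P B) (φ : B → P → G) (f : P ⊕ B → G)
    (u : P ⊕ B × Λ) (z : P × Λ) :
    (MStruct S φ Λ).inc u z ↔
      (MStruct S (switchGain φ f) Λ).inc (switchPoint f u) (switchLine f z) := by
  obtain ⟨p, m⟩ := z
  rcases u with q | ⟨b, l⟩
  · rfl
  · have gain_smul : switchGain φ f b p • f (Sum.inr b) • l = f (Sum.inl p) • φ b p • l := by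
      simp only [switchGain, smul_smul, inv_mul_cancel_right]
    change S.inc p b ∧ m = φ b p • l ↔
      S.inc p b ∧ f (Sum.inl p) • m = switchGain φ f b p • f (Sum.inr b) • l
    rw [gain_smul, smul_left_cancel_iff]

end Switching

theorem switching_isomorphism {P B G Λ : Type*} [Group G] [MulAction G Λ]
    (S : IncStruct P B) (φ : B → P → G) (f : P ⊕ B → G) :
    let φf : B → P → G := fun b p => f (Sum.inl p) * φ b p * (f (Sum.inr b))⁻¹
    let g₁ : P ⊕ B × Λ → P ⊕ B × Λ := fun u =>
      match u with
      | Sum.inl p => Sum.inl p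
      | Sum.inr (b, l) => Sum.inr (b, f (Sum.inr b) • l)
    let g₂ : P × Λ → P × Λ := fun z => (z.1, f (Sum.inl z.1) • z.2)
    Function.Bijective g₁ ∧ Function.Bijective g₂ ∧
      ∀ (u : P ⊕ B × Λ) (z : P × Λ),
        (MStruct S φ Λ).inc u z ↔ (MStruct S φf Λ).inc (g₁ u) (g₂ z) := by
  intro φf g₁ g₂
  have hg₁ : g₁ = switchPoint f := by
    funext u
    rcases u with p | ⟨b, l⟩ <;> rfl
  rw [hg₁]
  exact ⟨switchPoint_bijective f, switchLine_bijective f, mStruct_inc_switch_iff S φ f⟩
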